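/- arXiv:1103.5640 — 6 statements merged into one kernel-verified Lean document; each statement's English description precedes it below -/
import Mathlib

section
/- For every natural number ν ≥ 1, the integral from 0 to π of ((sin v / v) * exp(v * cot v))^ν with respect to v equals π * ν^ν / ν!. -/
open Real

/-! On the curve `ζ v = v cot v + i v` (`0 < v < π`) one has `ζ v = (v / sin v) e^{iv}`, so
`e^{ζ} / ζ = (sin v / v) e^{v cot v}` is real; since `Im ζ' = 1`, the integrand is the
derivative of `v ↦ Im Φ (ζ v)` for any primitive `Φ` of `e^{νz} / z^ν` on the slit plane.
Such a primitive is obtained from `Ein (ν z) + log z` by repeated integration by parts.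
As `v → 0⁺`, `ζ v → 1`, where `Φ` is real. As `v → π⁻`, `Re ζ v → -∞` while `Im ζ v → π`, so
the exponentially damped terms and `Im Ein (ν ζ)` vanish and only the logarithm survives:
`Im Φ (ζ v) → ν^(ν-1) / (ν-1)! · π`. -/

open MeasureTheory Filter Topology Set intervalIntegral
open scoped Complex Nat

-- The entire exponential integral `Ein` (DLMF 6.2.3).
noncomputable def ein (w : ℂ) : ℂ := ∫ t in (0:ℝ)..1, (cexp (w * t) - 1) / t

lemma norm_cexp_mul_sub_one_div_le (w : ℂ) {t : ℝ} (ht : t ∈ Ioc (0:ℝ) 1) :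
    ‖(cexp (w * t) - 1) / t‖ ≤ ‖w‖ * exp ‖w‖ := by
  have hwt : ‖(w * t : ℂ)‖ = ‖w‖ * t := by simp [abs_of_pos ht.1]
  have h := Complex.norm_exp_sub_sum_le_norm_mul_exp (w * t) 1
  simp only [Finset.range_one, Finset.sum_singleton, pow_zero, Nat.factorial_zero,
    Nat.cast_one, div_one, pow_one, hwt] at h
  rw [norm_div, Complex.norm_real, norm_of_nonneg ht.1.le, div_le_iff₀ ht.1]
  calc _ ≤ ‖w‖ * t * exp (‖w‖ * t) := h
    _ ≤ ‖w‖ * t * exp ‖w‖ := mul_le_mul_of_nonneg_left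
      (exp_le_exp.2 (mul_le_of_le_one_right (norm_nonneg w) ht.2))
      (mul_nonneg (norm_nonneg w) ht.1.le)
    _ = _ := by ring

lemma intervalIntegrable_cexp_mul_sub_one_div (w : ℂ) :
    IntervalIntegrable (fun t : ℝ => (cexp (w * t) - 1) / t) volume 0 1 := by
  rw [intervalIntegrable_iff_integrableOn_Ioc_of_le zero_le_one]
  refine Measure.integrableOn_of_bounded (M := ‖w‖ * exp ‖w‖) measure_Ioc_lt_top.ne
    (Measurable.aestronglyMeasurable (by fun_prop)) ?_
  filter_upwards [ae_restrict_mem measurableSet_Ioc] with t ht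
  exact norm_cexp_mul_sub_one_div_le w ht

lemma hasDerivAt_ein {w : ℂ} (hw : w ≠ 0) : HasDerivAt ein ((cexp w - 1) / w) w := by
  have key := hasDerivAt_integral_of_dominated_loc_of_deriv_le
    (F := fun (x : ℂ) (t : ℝ) => (cexp (x * t) - 1) / t) (F' := fun x t => cexp (x * t))
    (bound := fun _ => exp (‖w‖ + 1)) (μ := volume) (a := 0) (b := 1)
    (Metric.ball_mem_nhds w one_pos)
    (.of_forall fun _ => Measurable.aestronglyMeasurable (by fun_prop))
    (intervalIntegrable_cexp_mul_sub_one_div w) (by fun_prop) ?_ intervalIntegrable_const ?_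
  · rw [integral_exp_mul_complex hw, Complex.ofReal_one, Complex.ofReal_zero, mul_one,
      mul_zero, Complex.exp_zero] at key
    exact key.2
  · refine .of_forall fun t ht x hx => ?_
    rw [uIoc_of_le zero_le_one] at ht
    have hx' : ‖x‖ ≤ ‖w‖ + 1 := by
      linarith [norm_le_norm_add_norm_sub' x w, (mem_ball_iff_norm.1 hx).le]
    rw [Complex.norm_exp]
    gcongr
    calc (x * t).re = x.re * t := by simp
      _ ≤ ‖x‖ * 1 := mul_le_mul (Complex.re_le_norm x) ht.2 ht.1.le (norm_nonneg x)
      _ ≤ _ := by linarith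
  · refine .of_forall fun t ht x _ => ?_
    rw [uIoc_of_le zero_le_one] at ht
    have ht0 : (t : ℂ) ≠ 0 := by exact_mod_cast ht.1.ne'
    have h := (((hasDerivAt_id x).mul_const (t : ℂ)).cexp.sub_const 1).div_const (t : ℂ)
    simp only [id, one_mul, mul_div_assoc, div_self ht0, mul_one] at h
    exact h

lemma ein_im (w : ℂ) :
    (ein w).im = ∫ t in (0:ℝ)..1, exp (w.re * t) * sin (w.im * t) / t := by
  rw [ein, ← Complex.imCLM_apply,
    ← Complex.imCLM.intervalIntegral_comp_comm (intervalIntegrable_cexp_mul_sub_one_div w)]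
  refine integral_congr fun t _ => ?_
  simp [Complex.div_ofReal_im, Complex.exp_im]

lemma ein_ofReal_im (x : ℝ) : (ein x).im = 0 := by
  simp [ein_im]

lemma abs_im_ein_le {w : ℂ} (hw : w.re < 0) : |(ein w).im| ≤ |w.im| / |w.re| := by
  have hbound : ∀ t ∈ Ioc (0:ℝ) 1,
      ‖exp (w.re * t) * sin (w.im * t) / t‖ ≤ |w.im| * exp (w.re * t) := by
    intro t ht
    rw [norm_div, norm_mul, norm_of_nonneg (exp_pos _).le, norm_of_nonneg ht.1.le,
      div_le_iff₀ ht.1]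
    calc exp (w.re * t) * ‖sin (w.im * t)‖ ≤ exp (w.re * t) * (|w.im| * t) := by
          gcongr
          simpa [abs_mul, abs_of_pos ht.1] using abs_sin_le_abs (x := w.im * t)
      _ = _ := by ring
  have hint : ∫ t in (0:ℝ)..1, |w.im| * exp (w.re * t) = |w.im| * ((exp w.re - 1) / w.re) := by
    rw [intervalIntegral.integral_const_mul, integral_comp_mul_left (fun t => exp t) hw.ne,
      integral_exp]
    simp [div_eq_inv_mul]
  have h := norm_integral_le_of_norm_le zero_le_one (.of_forall hbound)
    (Continuous.intervalIntegrable (μ := volume) (by fun_prop) _ _)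
  rw [← ein_im, hint, norm_eq_abs] at h
  refine h.trans ?_
  rw [abs_of_neg hw,
    show |w.im| * ((exp w.re - 1) / w.re) = |w.im| * (1 - exp w.re) / -w.re by ring]
  gcongr
  · linarith
  · exact mul_le_of_le_one_right (abs_nonneg _) (by linarith [exp_pos w.re])

noncomputable def expPrim (a : ℝ) : ℕ → ℂ → ℂ
  | 0, z => ein (a * z) + Complex.log z
  | k + 1, z => (a * expPrim a k z - cexp (a * z) / z ^ (k + 1)) / (k + 1)

lemma hasDerivAt_expPrim {a : ℝ} (ha : a ≠ 0) (k : ℕ) {z : ℂ} (hz : z ∈ Complex.slitPlane) :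
    HasDerivAt (expPrim a k) (cexp (a * z) / z ^ (k + 1)) z := by
  have hz0 := Complex.slitPlane_ne_zero hz
  have ha' : (a : ℂ) ≠ 0 := Complex.ofReal_ne_zero.2 ha
  have haz : (a : ℂ) * z ≠ 0 := mul_ne_zero ha' hz0
  have hlin : HasDerivAt (fun z : ℂ => a * z) a z := by
    simpa using (hasDerivAt_id z).const_mul (a : ℂ)
  induction k with
  | zero =>
    refine (((hasDerivAt_ein haz).comp z hlin).add (Complex.hasDerivAt_log hz)).congr_deriv ?_
    field_simp
    ring
  | succ k ih =>
    refine (((ih.const_mul (a : ℂ)).sub (hlin.cexp.div (hasDerivAt_pow (k + 1) z)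
      (pow_ne_zero _ hz0))).div_const ((k : ℂ) + 1)).congr_deriv ?_
    field_simp
    push_cast
    ring

lemma expPrim_succ_im (a : ℝ) (k : ℕ) (z : ℂ) : (expPrim a (k + 1) z).im =
    (a * (expPrim a k z).im - (cexp (a * z) / z ^ (k + 1)).im) / (k + 1) := by
  have hk : (k : ℂ) + 1 = ((k + 1 : ℝ) : ℂ) := by push_cast; rfl
  rw [expPrim, hk, Complex.div_ofReal_im, Complex.sub_im, Complex.im_ofReal_mul]

lemma expPrim_ofReal_im (a : ℝ) (k : ℕ) {x : ℝ} (hx : 0 < x) : (expPrim a k x).im = 0 := by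
  induction k with
  | zero =>
    simp [expPrim, ← Complex.ofReal_mul, ein_ofReal_im, Complex.log_im,
      Complex.arg_ofReal_of_nonneg hx.le]
  | succ k ih =>
    rw [expPrim_succ_im, ih, ← Complex.ofReal_mul, ← Complex.ofReal_exp, ← Complex.ofReal_pow,
      ← Complex.ofReal_div, Complex.ofReal_im]
    simp

section LimitAtBot

variable {α : Type*} {l : Filter α} {ζ : α → ℂ}

lemma tendsto_norm_atTop_of_re_atBot (hre : Tendsto (fun x => (ζ x).re) l atBot) :
    Tendsto (fun x => ‖ζ x‖) l atTop :=
  tendsto_atTop_mono (fun x => Complex.abs_re_le_norm (ζ x)) (tendsto_abs_atBot_atTop.comp hre)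

lemma tendsto_arg_of_re_atBot {c : ℝ} (hre : Tendsto (fun x => (ζ x).re) l atBot)
    (him : Tendsto (fun x => (ζ x).im) l (𝓝 c)) (him0 : ∀ᶠ x in l, 0 ≤ (ζ x).im) :
    Tendsto (fun x => Complex.arg (ζ x)) l (𝓝 π) := by
  have h : Tendsto (fun x => arcsin ((-ζ x).im / ‖ζ x‖) + π) l (𝓝 (arcsin 0 + π)) := by
    refine ((continuous_arcsin.tendsto 0).comp ?_).add_const π
    simpa using him.neg.div_atTop (tendsto_norm_atTop_of_re_atBot hre)
  rw [arcsin_zero, zero_add] at h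
  refine h.congr' ?_
  filter_upwards [him0, hre.eventually_lt_atBot 0] with x hx0 hx
  exact (Complex.arg_of_re_neg_of_im_nonneg hx hx0).symm

lemma tendsto_im_ein_of_re_atBot {c : ℝ} (hre : Tendsto (fun x => (ζ x).re) l atBot)
    (him : Tendsto (fun x => (ζ x).im) l (𝓝 c)) :
    Tendsto (fun x => (ein (ζ x)).im) l (𝓝 0) := by
  have hbound : Tendsto (fun x => |(ζ x).im| / |(ζ x).re|) l (𝓝 0) :=
    him.abs.div_atTop (tendsto_abs_atBot_atTop.comp hre)
  refine squeeze_zero_norm' ?_ hbound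
  filter_upwards [hre.eventually_lt_atBot 0] with x hx
  exact abs_im_ein_le hx

lemma tendsto_cexp_div_pow_of_re_atBot {a : ℝ} (ha : 0 < a)
    (hre : Tendsto (fun x => (ζ x).re) l atBot) (n : ℕ) :
    Tendsto (fun x => cexp (a * ζ x) / ζ x ^ n) l (𝓝 0) := by
  rw [tendsto_zero_iff_norm_tendsto_zero]
  refine squeeze_zero' (.of_forall fun _ => norm_nonneg _) ?_
    (tendsto_exp_atBot.comp (hre.const_mul_atBot ha))
  filter_upwards [(tendsto_norm_atTop_of_re_atBot hre).eventually_ge_atTop 1] with x hx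
  rw [norm_div, norm_pow, Complex.norm_exp, Complex.re_ofReal_mul]
  exact div_le_self (exp_pos _).le (one_le_pow₀ hx)

lemma tendsto_im_expPrim_of_re_atBot {a : ℝ} (ha : 0 < a)
    (hre : Tendsto (fun x => (ζ x).re) l atBot) (him : Tendsto (fun x => (ζ x).im) l (𝓝 π))
    (him0 : ∀ᶠ x in l, 0 ≤ (ζ x).im) (k : ℕ) :
    Tendsto (fun x => (expPrim a k (ζ x)).im) l (𝓝 (a ^ k / k ! * π)) := by
  induction k with
  | zero =>
    have hein := tendsto_im_ein_of_re_atBot (ζ := fun x => a * ζ x)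
      (by simpa only [Complex.re_ofReal_mul] using hre.const_mul_atBot ha)
      (by simpa only [Complex.im_ofReal_mul] using him.const_mul a)
    simpa [expPrim, Complex.log_im] using hein.add (tendsto_arg_of_re_atBot hre him him0)
  | succ k ih =>
    have hE : Tendsto (fun x => (cexp (a * ζ x) / ζ x ^ (k + 1)).im) l (𝓝 0) :=
      (Complex.continuous_im.tendsto 0).comp (tendsto_cexp_div_pow_of_re_atBot ha hre (k + 1))
    simp only [expPrim_succ_im]
    convert ((ih.const_mul a).sub hE).div_const ((k : ℝ) + 1) using 2
    rw [Nat.factorial_succ]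
    push_cast
    field_simp
    ring

end LimitAtBot

noncomputable def cotCurve (v : ℝ) : ℂ := (v * cot v : ℝ) + v * Complex.I

lemma cotCurve_re (v : ℝ) : (cotCurve v).re = v * cot v := by
  simp only [cotCurve, Complex.add_re, Complex.ofReal_re, Complex.re_ofReal_mul, Complex.I_re,
    mul_zero, add_zero]

lemma cotCurve_im (v : ℝ) : (cotCurve v).im = v := by
  simp only [cotCurve, Complex.add_im, Complex.ofReal_im, Complex.im_ofReal_mul, Complex.I_im,
    mul_one, zero_add]

lemma cotCurve_mem_slitPlane {v : ℝ} (hv : 0 < v) : cotCurve v ∈ Complex.slitPlane :=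
  Complex.mem_slitPlane_iff.2 (Or.inr (by rw [cotCurve_im]; exact hv.ne'))

lemma cotCurve_eq_mul_cexp {v : ℝ} (hv : sin v ≠ 0) :
    cotCurve v = ((v / sin v : ℝ) : ℂ) * cexp (v * Complex.I) := by
  apply Complex.ext
  · rw [cotCurve_re, Complex.re_ofReal_mul, Complex.exp_ofReal_mul_I_re, cot_eq_cos_div_sin]
    ring
  · rw [cotCurve_im, Complex.im_ofReal_mul, Complex.exp_ofReal_mul_I_im]
    field_simp

lemma cexp_div_cotCurve {v : ℝ} (hv : sin v ≠ 0) :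
    cexp (cotCurve v) / cotCurve v = ((sin v / v * exp (v * cot v) : ℝ) : ℂ) := by
  have hexp : cexp (cotCurve v) = (exp (v * cot v) : ℂ) * cexp (v * Complex.I) := by
    rw [cotCurve, Complex.exp_add, Complex.ofReal_exp]
  rw [hexp, cotCurve_eq_mul_cexp hv, mul_div_mul_right _ _ (Complex.exp_ne_zero _)]
  push_cast
  field_simp

lemma hasDerivAt_im_comp_cotCurve {F : ℂ → ℂ} {v r : ℝ} (hv : sin v ≠ 0)
    (hF : HasDerivAt F r (cotCurve v)) : HasDerivAt (fun v => (F (cotCurve v)).im) r v := by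
  have hre : HasDerivAt (fun v => v * cot v) (deriv (fun v => v * cot v) v) v := by
    refine DifferentiableAt.hasDerivAt ?_
    simp only [cot_eq_cos_div_sin]
    exact differentiableAt_id.mul (differentiableAt_cos.div differentiableAt_sin hv)
  have him : HasDerivAt (fun v : ℝ => (v : ℂ) * Complex.I) Complex.I v := by
    simpa using Complex.ofRealCLM.hasDerivAt.mul_const Complex.I
  exact (Complex.imCLM.hasFDerivAt.comp_hasDerivAt v
    (hF.scomp v (hre.ofReal_comp.add him))).congr_deriv (by simp)

lemma tendsto_cotCurve_nhdsGT_zero : Tendsto cotCurve (𝓝[>] 0) (𝓝 1) := by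
  have hsinc : Tendsto (fun v => cos v / sinc v) (𝓝[>] 0) (𝓝 1) := by
    have h := ((continuous_cos.tendsto 0).div (continuous_sinc.tendsto 0) (by simp)).mono_left
      (nhdsWithin_le_nhds (s := Ioi 0))
    rwa [cos_zero, sinc_zero, div_one] at h
  have hre : Tendsto (fun v => v * cot v) (𝓝[>] 0) (𝓝 1) := by
    refine hsinc.congr' ?_
    filter_upwards [self_mem_nhdsWithin] with v hv
    rw [sinc_of_ne_zero (ne_of_gt hv), cot_eq_cos_div_sin]
    field_simp
  have him : Tendsto (fun v : ℝ => (v : ℂ) * Complex.I) (𝓝[>] 0) (𝓝 0) := by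
    have hc : Continuous fun v : ℝ => (v : ℂ) * Complex.I := by fun_prop
    exact (hc.tendsto' 0 0 (by simp)).mono_left nhdsWithin_le_nhds
  have h := ((Complex.continuous_ofReal.tendsto 1).comp hre).add him
  rwa [Complex.ofReal_one, add_zero] at h

lemma tendsto_re_cotCurve_nhdsLT_pi : Tendsto (fun v => (cotCurve v).re) (𝓝[<] π) atBot := by
  have hnum : Tendsto (fun v => v * cos v) (𝓝[<] π) (𝓝 (-π)) := by
    have hc : Continuous fun v : ℝ => v * cos v := by fun_prop
    exact (hc.tendsto' π (-π) (by simp)).mono_left nhdsWithin_le_nhds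
  have hsin : Tendsto sin (𝓝[<] π) (𝓝[>] 0) := by
    refine tendsto_nhdsWithin_iff.2 ⟨?_, ?_⟩
    · simpa using (continuous_sin.tendsto π).mono_left nhdsWithin_le_nhds
    · filter_upwards [Ioo_mem_nhdsLT pi_pos] with v hv
      exact sin_pos_of_pos_of_lt_pi hv.1 hv.2
  refine (hnum.neg_mul_atTop (neg_lt_zero.2 pi_pos) hsin.inv_tendsto_nhdsGT_zero).congr fun v => ?_
  rw [cotCurve_re, cot_eq_cos_div_sin, Pi.inv_apply, div_eq_mul_inv, mul_assoc]

lemma mul_cot_le_one {v : ℝ} (h0 : 0 < v) (hπ : v < π) : v * cot v ≤ 1 := by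
  have hsin := sin_pos_of_pos_of_lt_pi h0 hπ
  rw [cot_eq_cos_div_sin, ← mul_div_assoc, div_le_one hsin]
  rcases le_or_gt (cos v) 0 with hcos | hcos
  · nlinarith
  · have hv : v < π / 2 := by
      by_contra! h
      linarith [cos_nonpos_of_pi_div_two_le_of_le h (by linarith)]
    have htan := lt_tan h0 hv
    rw [tan_eq_sin_div_cos, lt_div_iff₀ hcos] at htan
    exact htan.le

lemma intervalIntegrable_pow_sin_div_mul_exp_mul_cot (n : ℕ) :
    IntervalIntegrable (fun v => (sin v / v * exp (v * cot v)) ^ n) volume 0 π := by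
  rw [intervalIntegrable_iff_integrableOn_Ioo_of_le pi_pos.le]
  refine Measure.integrableOn_of_bounded (M := exp 1 ^ n) measure_Ioo_lt_top.ne
    (Measurable.aestronglyMeasurable ?_) ?_
  · simp only [cot_eq_cos_div_sin]
    fun_prop
  filter_upwards [ae_restrict_mem measurableSet_Ioo] with v ⟨h0, hπ⟩
  have hsin := sin_pos_of_pos_of_lt_pi h0 hπ
  have hbase : 0 ≤ sin v / v * exp (v * cot v) := by positivity
  rw [norm_pow, norm_of_nonneg hbase]
  refine pow_le_pow_left₀ hbase ?_ n
  calc sin v / v * exp (v * cot v) ≤ 1 * exp 1 := by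
        gcongr
        · exact (div_le_one h0).2 (sin_le h0.le)
        · exact mul_cot_le_one h0 hπ
    _ = exp 1 := one_mul _

lemma tendsto_im_expPrim_cotCurve_nhdsGT_zero {a : ℝ} (ha : a ≠ 0) (k : ℕ) :
    Tendsto (fun v => (expPrim a k (cotCurve v)).im) (𝓝[>] 0) (𝓝 0) := by
  have hcont := (hasDerivAt_expPrim ha k Complex.one_mem_slitPlane).continuousAt
  have h := (Complex.continuous_im.tendsto _).comp (hcont.tendsto.comp tendsto_cotCurve_nhdsGT_zero)
  rwa [← Complex.ofReal_one, expPrim_ofReal_im a k one_pos] at h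

lemma tendsto_im_expPrim_cotCurve_nhdsLT_pi {a : ℝ} (ha : 0 < a) (k : ℕ) :
    Tendsto (fun v => (expPrim a k (cotCurve v)).im) (𝓝[<] π) (𝓝 (a ^ k / k ! * π)) := by
  refine tendsto_im_expPrim_of_re_atBot ha tendsto_re_cotCurve_nhdsLT_pi ?_ ?_ k
  · simp only [cotCurve_im]
    exact tendsto_id.mono_left nhdsWithin_le_nhds
  · filter_upwards [Ioo_mem_nhdsLT pi_pos] with v hv
    rw [cotCurve_im]
    exact hv.1.le

/-- Nuttall–Bouwkamp integral: for every natural `ν ≥ 1`,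
`∫_0^π ((sin v / v) e^{v cot v})^ν dv = π ν^ν / ν!`. -/
theorem nuttall_bouwkamp (ν : ℕ) (hν : 1 ≤ ν) :
    ∫ v in (0:ℝ)..π, ((Real.sin v / v) * Real.exp (v * Real.cot v)) ^ ν
      = π * (ν : ℝ) ^ ν / (Nat.factorial ν) := by
  obtain ⟨k, rfl⟩ := Nat.exists_eq_add_of_le' hν
  have ha : (0 : ℝ) < (k + 1 : ℕ) := by positivity
  have hderiv : ∀ v ∈ Ioo 0 π, HasDerivAt (fun v => (expPrim (k + 1 : ℕ) k (cotCurve v)).im)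
      ((sin v / v * exp (v * cot v)) ^ (k + 1)) v := by
    intro v ⟨h0, hπ⟩
    have hsin := (sin_pos_of_pos_of_lt_pi h0 hπ).ne'
    refine hasDerivAt_im_comp_cotCurve hsin ?_
    have h := hasDerivAt_expPrim ha.ne' k (cotCurve_mem_slitPlane h0)
    rwa [Complex.ofReal_natCast, Complex.exp_nat_mul, ← div_pow, cexp_div_cotCurve hsin,
      ← Complex.ofReal_pow] at h
  rw [integral_eq_sub_of_hasDerivAt_of_tendsto pi_pos hderiv
    (intervalIntegrable_pow_sin_div_mul_exp_mul_cot _)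
    (tendsto_im_expPrim_cotCurve_nhdsGT_zero ha.ne' k)
    (tendsto_im_expPrim_cotCurve_nhdsLT_pi ha k), Nat.factorial_succ]
  push_cast
  field_simp
  ring
end

section
/- The function t(v) = -v * csc(v) * exp(-v * cot v) is strictly decreasing on the open interval (0, π), with t(v) → -1/e as v → 0+ and t(v) → -∞ as v → π-. -/
/-!
On `(0, π)` we have `t = -exp g` with `g v = log v - log (sin v) - v cot v`, and
`g' v = ((sin v - v cos v)² + (v sin v)²) / (v sin² v) > 0`, so `t` decreases.
Writing `t v = -(v / sin v) exp (-(v / sin v) cos v)`, both limits follow from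
`v / sin v → 1` as `v → 0`, and `v / sin v → +∞`, `cos v → -1` as `v → π-`.
-/

open Real Filter Topology Set

noncomputable def branchCutParam (v : ℝ) : ℝ := -v * (1 / sin v) * exp (-v * cot v)

noncomputable def logNegBranchCutParam (v : ℝ) : ℝ := log v - log (sin v) - v * cos v / sin v

lemma branchCutParam_eq_neg_mul_exp (v : ℝ) :
    branchCutParam v = -(v / sin v) * exp (-(v / sin v * cos v)) := by
  rw [branchCutParam, cot_eq_cos_div_sin]
  ring_nf

lemma branchCutParam_eq_neg_exp {v : ℝ} (hv : 0 < v) (hs : 0 < sin v) :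
    branchCutParam v = -exp (logNegBranchCutParam v) := by
  rw [branchCutParam_eq_neg_mul_exp, logNegBranchCutParam, exp_sub, exp_sub, exp_log hv,
    exp_log hs, exp_neg, mul_div_right_comm]
  ring

lemma hasDerivAt_logNegBranchCutParam {v : ℝ} (hv : v ≠ 0) (hs : sin v ≠ 0) :
    HasDerivAt logNegBranchCutParam
      (((sin v - v * cos v) ^ 2 + (v * sin v) ^ 2) / (v * sin v ^ 2)) v := by
  have hlog := (hasDerivAt_log hv).sub ((hasDerivAt_log hs).comp v (hasDerivAt_sin v))
  have hquot := ((hasDerivAt_id' v).mul (hasDerivAt_cos v)).div (hasDerivAt_sin v) hs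
  refine (hlog.sub hquot).congr_deriv ?_
  simp only [Pi.mul_apply]
  field_simp
  ring

lemma strictMonoOn_logNegBranchCutParam : StrictMonoOn logNegBranchCutParam (Ioo 0 π) := by
  have hderiv : ∀ v ∈ Ioo 0 π, HasDerivAt logNegBranchCutParam
      (((sin v - v * cos v) ^ 2 + (v * sin v) ^ 2) / (v * sin v ^ 2)) v := fun v hv =>
    hasDerivAt_logNegBranchCutParam hv.1.ne' (sin_pos_of_pos_of_lt_pi hv.1 hv.2).ne'
  refine strictMonoOn_of_hasDerivWithinAt_pos (convex_Ioo 0 π)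
    (fun v hv => (hderiv v hv).continuousAt.continuousWithinAt)
    (fun v hv => (hderiv v (interior_subset hv)).hasDerivWithinAt) fun v hv => ?_
  rw [interior_Ioo] at hv
  have hsin := sin_pos_of_pos_of_lt_pi hv.1 hv.2
  have hv₀ := hv.1
  positivity

lemma strictAntiOn_branchCutParam : StrictAntiOn branchCutParam (Ioo 0 π) := by
  intro a ha b hb hab
  rw [branchCutParam_eq_neg_exp ha.1 (sin_pos_of_pos_of_lt_pi ha.1 ha.2),
    branchCutParam_eq_neg_exp hb.1 (sin_pos_of_pos_of_lt_pi hb.1 hb.2), neg_lt_neg_iff, exp_lt_exp]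
  exact strictMonoOn_logNegBranchCutParam ha hb hab

lemma tendsto_self_div_sin_nhdsNE_zero : Tendsto (fun v => v / sin v) (𝓝[≠] 0) (𝓝 1) := by
  have hsinc : Tendsto (fun v => (sinc v)⁻¹) (𝓝[≠] 0) (𝓝 1) := by
    simpa using ((continuous_sinc.tendsto 0).inv₀ (by simp)).mono_left nhdsWithin_le_nhds
  refine hsinc.congr' (eventually_nhdsWithin_of_forall fun v hv => ?_)
  rw [sinc_of_ne_zero hv, inv_div]

lemma tendsto_branchCutParam_nhdsNE_zero :
    Tendsto branchCutParam (𝓝[≠] 0) (𝓝 (-1 / exp 1)) := by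
  have hq := tendsto_self_div_sin_nhdsNE_zero
  have hcos : Tendsto cos (𝓝[≠] 0) (𝓝 1) := by
    simpa using continuous_cos.continuousWithinAt.tendsto (x := 0) (s := {0}ᶜ)
  have hlim := hq.neg.mul ((continuous_exp.tendsto _).comp (hq.mul hcos).neg)
  rw [show -(1 : ℝ) * exp (-(1 * 1)) = -1 / exp 1 by rw [mul_one, exp_neg]; ring] at hlim
  exact hlim.congr fun v => (branchCutParam_eq_neg_mul_exp v).symm

lemma tendsto_self_div_sin_nhdsLT_pi : Tendsto (fun v => v / sin v) (𝓝[<] π) atTop := by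
  have hsin : Tendsto sin (𝓝[<] π) (𝓝[>] 0) := by
    refine tendsto_nhdsWithin_of_tendsto_nhds_of_eventually_within _ ?_ ?_
    · simpa using continuous_sin.continuousWithinAt.tendsto (x := π) (s := Iio π)
    · filter_upwards [Ioo_mem_nhdsLT pi_pos] with v hv
      exact sin_pos_of_pos_of_lt_pi hv.1 hv.2
  have hid : Tendsto (fun v : ℝ => v) (𝓝[<] π) (𝓝 π) := tendsto_nhdsWithin_of_tendsto_nhds tendsto_id
  simpa only [div_eq_mul_inv, Function.comp_def] using
    hid.pos_mul_atTop pi_pos (tendsto_inv_nhdsGT_zero.comp hsin)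

lemma tendsto_branchCutParam_nhdsLT_pi : Tendsto branchCutParam (𝓝[<] π) atBot := by
  have hq := tendsto_self_div_sin_nhdsLT_pi
  have hcos : Tendsto (fun v => -cos v) (𝓝[<] π) (𝓝 1) := by
    simpa using ((continuous_cos.tendsto π).neg).mono_left nhdsWithin_le_nhds
  have hexp := tendsto_exp_atTop.comp (hq.atTop_mul_pos one_pos hcos)
  refine (tendsto_neg_atTop_atBot.comp (hq.atTop_mul_atTop₀ hexp)).congr fun v => ?_
  rw [Function.comp_apply, Function.comp_apply, branchCutParam_eq_neg_mul_exp, mul_neg, neg_mul]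

/-- The function `t v = -v csc v e^{-v cot v}` is strictly decreasing on `(0, π)`,
tends to `-1/e` as `v → 0+` and to `-∞` as `v → π-`. -/
theorem branch_cut_param_strictAnti :
    StrictAntiOn (fun v : ℝ => -v * (1 / Real.sin v) * Real.exp (-v * Real.cot v))
        (Set.Ioo 0 π) ∧
      Tendsto (fun v : ℝ => -v * (1 / Real.sin v) * Real.exp (-v * Real.cot v))
        (nhdsWithin 0 (Set.Ioi 0)) (nhds (-1 / Real.exp 1)) ∧
      Tendsto (fun v : ℝ => -v * (1 / Real.sin v) * Real.exp (-v * Real.cot v))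
        (nhdsWithin π (Set.Iio π)) atBot :=
  ⟨strictAntiOn_branchCutParam,
    tendsto_branchCutParam_nhdsNE_zero.mono_left (nhdsWithin_mono 0 fun _ hv => ne_of_gt hv),
    tendsto_branchCutParam_nhdsLT_pi⟩
end

section
/- Let W : ℝ → ℝ satisfy W(x) * exp(W(x)) = x and W(x) > 0 for all x > 0. Then for all x > 0, 1/(1 + W(x)) = (1/π) * ∫ from 0 to π of 1 / (1 + x * exp(v*cot v) * sin(v)/v) dv. -/
/-!
Put `w = W(x)`, so that `x = w eʷ`, and `h(z) = z + x eᶻ`. Along `γ(v) = v cot v + i v` one has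
`γ e^{-γ} = v e^{-v cot v} / sin v > 0`, so `γ / h(γ)` is real and equals the integrand, while
`Im γ' = 1`; hence the integrand is the derivative of `Im G(γ(v))` for any primitive `G` of
`z / h(z)`. In the strip `|Im z| < π` the only zero of `h` is the simple zero `-w`, so
`z / h(z) = 1 + R / (z + w) + ω(z)` with `R = -w / (1 + w)` and `ω` holomorphic in the strip,
real on the real axis and tending to `0` as `Re z → -∞`. Taking
`G(z) = z + R log(z + w) + ∫_1^z ω`, `Im G(γ(v))` tends to `0` as `v → 0⁺` (where `γ(v) → 1`) and
to `π + Rπ = π / (1 + w)` as `v → π⁻` (where `Re γ(v) → -∞` and `Im γ(v) → π`).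
-/

open Real Set Filter Topology Complex

lemma Real.mul_sin_nonneg {y : ℝ} (hy : |y| ≤ π) : 0 ≤ y * Real.sin y := by
  rcases le_total 0 y with h | h
  · exact mul_nonneg h (sin_nonneg_of_nonneg_of_le_pi h (abs_le.mp hy).2)
  · exact mul_nonneg_of_nonpos_of_nonpos h (sin_nonpos_of_nonpos_of_neg_pi_le h (abs_le.mp hy).1)

namespace Complex

variable {α E : Type*} [NormedAddCommGroup E] {f : ℂ → E} {J : Set ℝ}

lemma intervalIntegrable_horizontal (hf : ContinuousOn f (im ⁻¹' J)) {b : ℝ} (hb : b ∈ J)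
    (a₁ a₂ : ℝ) : IntervalIntegrable (fun x : ℝ => f (x + b * I)) MeasureTheory.volume a₁ a₂ :=
  (hf.comp_continuous (by fun_prop) fun x => by simpa using hb).intervalIntegrable _ _

lemma intervalIntegrable_vertical [J.OrdConnected] (hf : ContinuousOn f (im ⁻¹' J)) (a : ℝ)
    {b₁ b₂ : ℝ} (hb₁ : b₁ ∈ J) (hb₂ : b₂ ∈ J) :
    IntervalIntegrable (fun y : ℝ => f (a + y * I)) MeasureTheory.volume b₁ b₂ :=
  ContinuousOn.intervalIntegrable <| hf.comp (by fun_prop) fun y hy => by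
    simpa using OrdConnected.uIcc_subset ‹_› hb₁ hb₂ hy

variable [NormedSpace ℂ E]

lemma wedgeIntegral_add_wedgeIntegral [J.OrdConnected] (hf : DifferentiableOn ℂ f (im ⁻¹' J))
    {c z w : ℂ} (hc : c.im ∈ J) (hz : z.im ∈ J) (hw : w.im ∈ J) :
    wedgeIntegral c z f + wedgeIntegral z w f = wedgeIntegral c w f := by
  have hrect : Rectangle (z.re + c.im * I) (w.re + z.im * I) ⊆ im ⁻¹' J := fun p hp => by
    simpa using OrdConnected.uIcc_subset ‹_› hc hz (by simpa [Rectangle] using hp.2)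
  have hzero := integral_boundary_rect_eq_zero_of_differentiableOn f _ _ (hf.mono hrect)
  simp only [add_re, ofReal_re, mul_re, I_re, mul_zero, ofReal_im, I_im, mul_one, sub_self,
    add_zero, add_im, mul_im, zero_add] at hzero
  have hcont := hf.continuousOn
  rw [wedgeIntegral, wedgeIntegral, wedgeIntegral,
    ← intervalIntegral.integral_add_adjacent_intervals
      (intervalIntegrable_horizontal hcont hc c.re z.re)
      (intervalIntegrable_horizontal hcont hc _ w.re),
    ← intervalIntegral.integral_add_adjacent_intervals (intervalIntegrable_vertical hcont _ hc hz)
      (intervalIntegrable_vertical hcont _ hz hw), smul_add]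
  linear_combination (norm := module) -hzero

/-- Near `z` the wedge integral based at `c` differs by a constant from the one based at `z`,
to which Morera's theorem on a disc applies. -/
theorem hasDerivAt_wedgeIntegral_of_differentiableOn [CompleteSpace E] [J.OrdConnected]
    (hJ : IsOpen J) (hf : DifferentiableOn ℂ f (im ⁻¹' J)) {c z : ℂ} (hc : c.im ∈ J)
    (hz : z.im ∈ J) : HasDerivAt (fun w => wedgeIntegral c w f) (f z) z := by
  have hJ' : im ⁻¹' J ∈ 𝓝 z := (hJ.preimage continuous_im).mem_nhds hz
  obtain ⟨r, hr, hball⟩ := Metric.mem_nhds_iff.mp hJ'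
  have hloc : HasDerivAt (fun w => wedgeIntegral z w f) (f z) z :=
    (hf.mono hball).isConservativeOn.hasDerivAt_wedgeIntegral (hf.continuousOn.mono hball)
      (Metric.mem_ball_self hr)
  refine (hloc.const_add (wedgeIntegral c z f)).congr_of_eventuallyEq ?_
  filter_upwards [hJ'] with w hw
  exact (wedgeIntegral_add_wedgeIntegral hf hc hz hw).symm

lemma im_wedgeIntegral_ofReal {g : ℂ → ℂ} (hg : ∀ s : ℝ, (g s).im = 0) (a : ℝ) (z : ℂ) :
    (wedgeIntegral a z g).im = (∫ y in (0 : ℝ)..z.im, g (z.re + y * I)).re := by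
  have hreal : (fun s : ℝ => g s) = fun s : ℝ => ((g s).re : ℂ) :=
    funext fun s => Complex.ext (by simp) (by simp [hg s])
  simp [wedgeIntegral, hreal, intervalIntegral.integral_ofReal]

lemma tendsto_comap_re_atBot_cobounded : Tendsto id (comap re atBot) (Bornology.cobounded ℂ) :=
  tendsto_norm_atTop_iff_cobounded.mp <| tendsto_atTop_mono
    (fun z => (neg_le_abs z.re).trans (abs_re_le_norm z))
    (tendsto_neg_atBot_atTop.comp tendsto_comap)

lemma tendsto_integral_vertical {f : ℂ → E} (hf : Tendsto f (comap re atBot) (𝓝 0))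
    {l : Filter α} {u b : α → ℝ} (hu : Tendsto u l atBot) {B : ℝ} (hb : ∀ᶠ a in l, |b a| ≤ B) :
    Tendsto (fun a => ∫ y in (0 : ℝ)..b a, f (u a + y * I)) l (𝓝 0) := by
  rw [Metric.tendsto_nhds]
  intro ε hε
  have hB : 0 < |B| + 1 := by positivity
  have hsmall :=
    hf.eventually (Metric.closedBall_mem_nhds 0 (by positivity : 0 < ε / 2 / (|B| + 1)))
  rw [Filter.eventually_comap] at hsmall
  filter_upwards [hu.eventually hsmall, hb] with a ha hba
  rw [dist_zero_right]
  calc ‖∫ y in (0 : ℝ)..b a, f (u a + y * I)‖ ≤ ε / 2 / (|B| + 1) * |b a - 0| :=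
        intervalIntegral.norm_integral_le_of_norm_le_const fun y _ => by
          simpa using ha _ (by simp)
    _ ≤ ε / 2 / (|B| + 1) * (|B| + 1) := by
        gcongr; rw [sub_zero]; linarith [le_abs_self B]
    _ < ε := by rw [div_mul_cancel₀ _ hB.ne']; linarith

lemma tendsto_arg_of_tendsto_re_atBot {l : Filter α} {z : α → ℂ} {c : ℝ}
    (hre : Tendsto (fun a => (z a).re) l atBot) (him : Tendsto (fun a => (z a).im) l (𝓝 c))
    (hpos : ∀ᶠ a in l, 0 ≤ (z a).im) : Tendsto (fun a => arg (z a)) l (𝓝 π) := by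
  have hnorm : Tendsto (fun a => ‖z a‖) l atTop :=
    tendsto_atTop_mono (fun a => (neg_le_abs _).trans (abs_re_le_norm (z a)))
      (tendsto_neg_atBot_atTop.comp hre)
  have hasin := ((continuous_arcsin.tendsto 0).comp (him.neg.div_atTop hnorm)).add_const π
  rw [Function.comp_def, arcsin_zero, zero_add] at hasin
  refine hasin.congr' ?_
  filter_upwards [hre.eventually (eventually_lt_atBot 0), hpos] with a h1 h2
  rw [arg_of_re_neg_of_im_nonneg h1 h2, neg_im]

end Complex

noncomputable section

namespace LambertWStieltjes

def linExp (x : ℝ) (z : ℂ) : ℂ := z + x * cexp z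

def residue (w : ℝ) : ℝ := -w / (1 + w)

-- the inner `dslope` divides out the zero `-w` of `linExp x`, the outer one the pole of
-- `z / linExp x z` there
def regularPart (x w : ℝ) (z : ℂ) : ℂ :=
  dslope (fun z => z / dslope (linExp x) (-w) z) (-w) z - 1

def strip : Set ℂ := im ⁻¹' Ioo (-π) π

def primitive (x w : ℝ) (z : ℂ) : ℂ :=
  z + residue w * log (z + w) + wedgeIntegral 1 z (regularPart x w)

def contour (v : ℝ) : ℂ := (v * Real.cot v : ℝ) + v * I

def integrand (x v : ℝ) : ℝ := 1 / (1 + x * Real.exp (v * Real.cot v) * Real.sin v / v)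

variable {x w : ℝ}

lemma hasDerivAt_linExp (z : ℂ) : HasDerivAt (linExp x) (1 + x * cexp z) z :=
  (hasDerivAt_id z).add ((hasDerivAt_exp z).const_mul _)

lemma ofReal_mul_exp_neg (hx : w * Real.exp w = x) : (x : ℂ) * cexp (-w) = w := by
  rw [← hx]; push_cast; rw [mul_assoc, ← Complex.exp_add]; simp

lemma linExp_neg (hx : w * Real.exp w = x) : linExp x (-w) = 0 := by
  rw [linExp, ofReal_mul_exp_neg hx]; ring

lemma dslope_linExp_self (hx : w * Real.exp w = x) : dslope (linExp x) (-w) (-w) = 1 + w := by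
  rw [dslope_same, (hasDerivAt_linExp _).deriv, ofReal_mul_exp_neg hx]

lemma linExp_eq_mul_dslope (hx : w * Real.exp w = x) (z : ℂ) :
    linExp x z = (z + w) * dslope (linExp x) (-w) z := by
  simpa [linExp_neg hx] using (sub_smul_dslope (linExp x) (-w : ℂ) z).symm

lemma div_linExp_eq (hx : w * Real.exp w = x) {z : ℂ} (hz : z ≠ -w) :
    z / linExp x z = 1 + residue w / (z + w) + regularPart x w z := by
  have hzw : z + w ≠ 0 := by rwa [← sub_neg_eq_add, sub_ne_zero]
  have key := sub_smul_dslope (fun z => z / dslope (linExp x) (-w) z) (-w : ℂ) z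
  simp only [sub_neg_eq_add, smul_eq_mul, dslope_linExp_self hx] at key
  rw [regularPart, linExp_eq_mul_dslope hx, residue, div_mul_eq_div_div_swap]
  generalize z / dslope (linExp x) (-w) z = a at key ⊢
  field_simp
  push_cast
  linear_combination -key

lemma isOpen_strip : IsOpen strip := isOpen_Ioo.preimage continuous_im

lemma ofReal_mem_strip (s : ℝ) : (s : ℂ) ∈ strip := by simp [strip, pi_pos]

lemma linExp_ne_zero (hw : 0 < w) (hx : w * Real.exp w = x) {z : ℂ} (hz : z ∈ strip)
    (hzw : z ≠ -w) : linExp x z ≠ 0 := by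
  intro h0
  have hx0 : 0 < x := by rw [← hx]; positivity
  -- `Im h(z) = y + x eᵘ sin y` has the sign of `y` when `|y| < π`
  have him : z.im + x * (Real.exp z.re * Real.sin z.im) = 0 := by
    simpa [linExp, exp_im] using congrArg im h0
  have hy : z.im = 0 := by
    have hsq : z.im ^ 2 = -(x * Real.exp z.re) * (z.im * Real.sin z.im) := by
      linear_combination z.im * him
    have := mul_sin_nonneg (abs_lt.mpr hz).le
    have : 0 < x * Real.exp z.re := by positivity
    exact pow_eq_zero_iff two_ne_zero |>.mp (le_antisymm (by nlinarith) (sq_nonneg _))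
  have hre : z.re + x * Real.exp z.re = 0 := by
    simpa [linExp, exp_re, hy] using congrArg re h0
  have hroot : -w + x * Real.exp (-w) = 0 := by
    rw [← hx, mul_assoc, ← Real.exp_add]; simp
  have hmono : StrictMono fun s : ℝ => s + x * Real.exp s :=
    strictMono_id.add_monotone fun a b hab => by gcongr
  exact hzw (Complex.ext (by simpa using hmono.injective (hre.trans hroot.symm)) (by simp [hy]))

lemma dslope_linExp_ne_zero (hw : 0 < w) (hx : w * Real.exp w = x) {z : ℂ} (hz : z ∈ strip) :
    dslope (linExp x) (-w) z ≠ 0 := by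
  rcases eq_or_ne z (-w) with rfl | hzw
  · rw [dslope_linExp_self hx]
    exact_mod_cast (by linarith : (1 + w : ℝ) ≠ 0)
  · exact right_ne_zero_of_mul (linExp_eq_mul_dslope hx z ▸ linExp_ne_zero hw hx hz hzw)

lemma differentiableOn_regularPart (hw : 0 < w) (hx : w * Real.exp w = x) :
    DifferentiableOn ℂ (regularPart x w) strip := by
  have hnhds : strip ∈ 𝓝 (-w : ℂ) := isOpen_strip.mem_nhds (by simpa using ofReal_mem_strip (-w))
  have hq : DifferentiableOn ℂ (dslope (linExp x) (-w)) strip :=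
    (differentiableOn_dslope hnhds).mpr fun z _ =>
      (hasDerivAt_linExp z).differentiableAt.differentiableWithinAt
  have hg : DifferentiableOn ℂ (fun z => z / dslope (linExp x) (-w) z) strip :=
    differentiableOn_id.div hq fun z hz => dslope_linExp_ne_zero hw hx hz
  exact ((differentiableOn_dslope hnhds).mpr hg).sub_const 1

lemma regularPart_ofReal_im (hw : 0 < w) (hx : w * Real.exp w = x) (s : ℝ) :
    (regularPart x w s).im = 0 := by
  have hcont : Continuous fun s : ℝ => (regularPart x w s).im :=
    continuous_im.comp ((differentiableOn_regularPart hw hx).continuousOn.comp_continuous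
      continuous_ofReal ofReal_mem_strip)
  refine congrFun (hcont.ext_on (dense_compl_singleton (-w)) continuous_const fun s hs => ?_) s
  have h := div_linExp_eq hx (z := s) (by exact_mod_cast hs)
  rw [linExp] at h
  have hreal :
      regularPart x w s = ((s / (s + x * Real.exp s) - 1 - residue w / (s + w) : ℝ) : ℂ) := by
    push_cast
    linear_combination -h
  exact (congrArg im hreal).trans (ofReal_im _)

lemma tendsto_regularPart (hx : w * Real.exp w = x) :
    Tendsto (regularPart x w) (comap re atBot) (𝓝 0) := by
  have hinv : Tendsto (fun z : ℂ => z⁻¹) (comap re atBot) (𝓝 0) :=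
    tendsto_inv₀_cobounded.comp tendsto_comap_re_atBot_cobounded
  have hshift : Tendsto (fun z : ℂ => z + w) (comap re atBot) (comap re atBot) :=
    tendsto_comap_iff.mpr
      (by simpa [Function.comp_def] using tendsto_atBot_add_const_right _ w tendsto_comap)
  have hquot : Tendsto (fun z => z / linExp x z) (comap re atBot) (𝓝 1) := by
    have hlim := (tendsto_const_nhds.add ((tendsto_exp_comap_re_atBot.const_mul (x : ℂ)).mul
      hinv)).inv₀ (by simp : (1 : ℂ) + x * 0 * 0 ≠ 0)
    simp only [mul_zero, add_zero, inv_one] at hlim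
    refine hlim.congr' ?_
    filter_upwards [tendsto_comap_re_atBot_cobounded.eventually_ne_cobounded 0] with z hz
    rw [linExp, ← inv_div, add_div, div_self (id hz : z ≠ 0), div_eq_mul_inv]
  have hres := (hinv.comp hshift).const_mul (residue w : ℂ)
  rw [mul_zero] at hres
  have hlim := (hquot.sub_const 1).sub hres
  rw [sub_self, sub_zero] at hlim
  refine hlim.congr' ?_
  filter_upwards [tendsto_comap.eventually (eventually_lt_atBot (-w))] with z hz
  have hzw : z ≠ -w := fun h => by simp [h] at hz
  simp only [Function.comp_apply, div_linExp_eq hx hzw]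
  ring

lemma hasDerivAt_primitive (hw : 0 < w) (hx : w * Real.exp w = x) {z : ℂ} (hz : z ∈ strip)
    (hzw : z + w ∈ slitPlane) : HasDerivAt (primitive x w) (z / linExp x z) z := by
  have hlog := (((hasDerivAt_id' z).add_const (w : ℂ)).clog hzw).const_mul (residue w : ℂ)
  have hwedge := hasDerivAt_wedgeIntegral_of_differentiableOn isOpen_Ioo
    (differentiableOn_regularPart hw hx) (by simp [pi_pos] : (1 : ℂ).im ∈ Ioo (-π) π) hz
  rw [div_linExp_eq hx (by rintro rfl; simp at hzw), ← mul_one_div]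
  exact ((hasDerivAt_id' z).add hlog).add hwedge

@[simp] lemma contour_re (v : ℝ) : (contour v).re = v * Real.cot v := by
  simp only [contour, add_re, ofReal_re, re_ofReal_mul, I_re, mul_zero, add_zero]

@[simp] lemma contour_im (v : ℝ) : (contour v).im = v := by
  simp only [contour, add_im, ofReal_im, im_ofReal_mul, I_im, mul_one, zero_add]

lemma hasDerivAt_contour {v : ℝ} (hv : Real.sin v ≠ 0) :
    HasDerivAt contour (((Real.sin v * Real.cos v - v) / Real.sin v ^ 2 : ℝ) + I) v := by
  have h : HasDerivAt (fun u => u * Real.cos u / Real.sin u) (((1 * Real.cos v + v * -Real.sin v)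
      * Real.sin v - v * Real.cos v * Real.cos v) / Real.sin v ^ 2) v :=
    ((hasDerivAt_id' v).mul (Real.hasDerivAt_cos v)).div (Real.hasDerivAt_sin v) hv
  have hre : HasDerivAt (fun v => v * Real.cot v)
      ((Real.sin v * Real.cos v - v) / Real.sin v ^ 2) v := by
    simp only [Real.cot_eq_cos_div_sin, ← mul_div_assoc]
    refine h.congr_deriv ?_
    congr 1
    linear_combination -v * Real.sin_sq_add_cos_sq v
  exact hre.ofReal_comp.add (by simpa using (hasDerivAt_id v).ofReal_comp.mul_const I)

lemma contour_mul_exp {v : ℝ} (hv : Real.sin v ≠ 0) :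
    contour v * (Real.exp (v * Real.cot v) * Real.sin v / v : ℝ) = cexp (contour v) := by
  have hv0 : v ≠ 0 := by rintro rfl; simp at hv
  have hs : Complex.sin v ≠ 0 := by rw [← ofReal_sin]; exact_mod_cast hv
  have hv0' : (v : ℂ) ≠ 0 := by exact_mod_cast hv0
  rw [contour, Complex.exp_add, ← ofReal_exp, exp_mul_I, Real.cot_eq_cos_div_sin]
  push_cast
  field_simp

lemma contour_div_linExp {v : ℝ} (hv : Real.sin v ≠ 0) :
    contour v / linExp x (contour v) = integrand x v := by
  have hv0 : v ≠ 0 := by rintro rfl; simp at hv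
  have hγ : contour v ≠ 0 := fun h => hv0 (by simpa using congrArg im h)
  rw [linExp, ← contour_mul_exp hv, mul_left_comm, ← mul_one_add, div_mul_cancel_left₀ hγ,
    integrand]
  push_cast
  ring

lemma hasDerivAt_im_primitive_contour (hw : 0 < w) (hx : w * Real.exp w = x) {v : ℝ}
    (hv : v ∈ Ioo 0 π) :
    HasDerivAt (fun v => (primitive x w (contour v)).im) (integrand x v) v := by
  have hs : Real.sin v ≠ 0 := (Real.sin_pos_of_pos_of_lt_pi hv.1 hv.2).ne'
  have hstrip : contour v ∈ strip := by simp [strip, hv.2, (neg_neg_of_pos pi_pos).trans hv.1]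
  have hslit : contour v + w ∈ slitPlane := by
    rw [mem_slitPlane_iff]; right; simpa using hv.1.ne'
  have h := imCLM.hasFDerivAt.comp_hasDerivAt v
    ((hasDerivAt_primitive hw hx hstrip hslit).comp v (hasDerivAt_contour hs))
  rw [contour_div_linExp hs] at h
  refine h.congr_deriv ?_
  simp only [imCLM_apply, im_ofReal_mul, add_im, ofReal_im, I_im, zero_add, mul_one]

lemma tendsto_contour_zero : Tendsto contour (𝓝[≠] 0) (𝓝 1) := by
  have hlim : Tendsto (Real.cos / Real.sinc) (𝓝 0) (𝓝 1) := by
    simpa using (Real.continuous_cos.continuousAt.div Real.continuous_sinc.continuousAt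
      (by simp : Real.sinc 0 ≠ 0)).tendsto
  have hcot : Tendsto (fun v => v * Real.cot v) (𝓝[≠] 0) (𝓝 1) := by
    refine (hlim.mono_left nhdsWithin_le_nhds).congr' ?_
    filter_upwards [self_mem_nhdsWithin] with v hv
    rw [Pi.div_apply, Real.sinc_of_ne_zero hv, Real.cot_eq_cos_div_sin]
    field_simp
  have hv : Tendsto (fun v : ℝ => (v : ℂ)) (𝓝[≠] 0) (𝓝 0) :=
    (continuous_ofReal.tendsto' 0 0 ofReal_zero).mono_left nhdsWithin_le_nhds
  have h := ((continuous_ofReal.tendsto 1).comp hcot).add (hv.mul_const I)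
  rwa [ofReal_one, zero_mul, add_zero] at h

lemma tendsto_mul_cot_pi : Tendsto (fun v => v * Real.cot v) (𝓝[<] π) atBot := by
  have hsin : Tendsto Real.sin (𝓝[<] π) (𝓝[>] 0) := by
    refine tendsto_nhdsWithin_of_tendsto_nhds_of_eventually_within _ ?_ ?_
    · simpa using (Real.continuous_sin.tendsto π).mono_left nhdsWithin_le_nhds
    · filter_upwards [Ioo_mem_nhdsLT pi_pos] with v hv
      exact Real.sin_pos_of_pos_of_lt_pi hv.1 hv.2
  have hnum : Tendsto (fun v => v * Real.cos v) (𝓝[<] π) (𝓝 (-π)) :=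
    ((continuous_id.mul Real.continuous_cos).tendsto' π (-π) (by simp)).mono_left
      nhdsWithin_le_nhds
  refine (hsin.inv_tendsto_nhdsGT_zero.atTop_mul_neg (neg_neg_of_pos pi_pos) hnum).congr
    fun v => ?_
  simp only [Pi.inv_apply, Real.cot_eq_cos_div_sin]
  ring

lemma tendsto_im_primitive_contour_zero (hw : 0 < w) (hx : w * Real.exp w = x) :
    Tendsto (fun v => (primitive x w (contour v)).im) (𝓝[>] 0) (𝓝 0) := by
  have h1w : (1 : ℂ) + w = (1 + w : ℝ) := by push_cast; rfl
  have hcont : ContinuousAt (primitive x w) 1 :=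
    (hasDerivAt_primitive hw hx (by simpa using ofReal_mem_strip 1)
      (by rw [h1w]; exact ofReal_mem_slitPlane.mpr (by linarith))).continuousAt
  have hval : (primitive x w 1).im = 0 := by
    rw [primitive, h1w, ← ofReal_log (by linarith)]
    simp [wedgeIntegral]
  have h := (continuous_im.tendsto _).comp (hcont.tendsto.comp
    (tendsto_contour_zero.mono_left (nhdsWithin_mono _ fun v (hv : 0 < v) => hv.ne')))
  rwa [hval] at h

lemma tendsto_im_primitive_contour_pi (hw : 0 < w) (hx : w * Real.exp w = x) :
    Tendsto (fun v => (primitive x w (contour v)).im) (𝓝[<] π) (𝓝 (π / (1 + w))) := by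
  have hform : ∀ v, (primitive x w (contour v)).im = v + residue w * arg (contour v + w) +
      (∫ y in (0 : ℝ)..v, regularPart x w ((v * Real.cot v : ℝ) + y * I)).re := fun v => by
    rw [primitive, add_im, add_im, im_ofReal_mul, log_im, ← ofReal_one,
      im_wedgeIntegral_ofReal (regularPart_ofReal_im hw hx), contour_im, contour_re]
  have hid : Tendsto (fun v : ℝ => v) (𝓝[<] π) (𝓝 π) := tendsto_id.mono_left nhdsWithin_le_nhds
  have hbelow : ∀ᶠ v in 𝓝[<] π, v ∈ Ioo 0 π := Ioo_mem_nhdsLT pi_pos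
  have harg : Tendsto (fun v => arg (contour v + w)) (𝓝[<] π) (𝓝 π) :=
    tendsto_arg_of_tendsto_re_atBot
      (by simpa using tendsto_atBot_add_const_right _ w tendsto_mul_cot_pi) (by simpa using hid)
      (by filter_upwards [hbelow] with v hv using by simpa using hv.1.le)
  have hint := tendsto_integral_vertical (tendsto_regularPart hx) tendsto_mul_cot_pi (B := π)
    (by filter_upwards [hbelow] with v hv using abs_le.mpr ⟨by linarith [hv.1, pi_pos], hv.2.le⟩)
  have hlim := (hid.add (harg.const_mul (residue w))).add ((continuous_re.tendsto 0).comp hint)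
  simp only [← hform, Function.comp_def, zero_re, add_zero] at hlim
  convert hlim using 2
  rw [residue]
  field_simp
  ring

lemma intervalIntegrable_integrand (hx : 0 ≤ x) :
    IntervalIntegrable (integrand x) MeasureTheory.volume 0 π := by
  refine (intervalIntegrable_const (c := (1 : ℝ))).mono_fun' ?_ ?_
  · refine Measurable.aestronglyMeasurable ?_
    unfold integrand
    simp only [Real.cot_eq_cos_div_sin]
    fun_prop
  · rw [Filter.EventuallyLE, MeasureTheory.ae_restrict_iff' measurableSet_uIoc]
    refine Eventually.of_forall fun v hv => ?_
    rw [uIoc_of_le pi_pos.le] at hv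
    have ht : 0 ≤ x * Real.exp (v * Real.cot v) * Real.sin v / v := by
      have := Real.sin_nonneg_of_nonneg_of_le_pi hv.1.le hv.2
      have := hv.1.le
      positivity
    rw [integrand, Real.norm_eq_abs, abs_of_pos (by positivity), div_le_one (by positivity)]
    linarith

theorem integral_integrand (hw : 0 < w) (hx : w * Real.exp w = x) :
    ∫ v in (0 : ℝ)..π, integrand x v = π / (1 + w) := by
  rw [intervalIntegral.integral_eq_sub_of_hasDerivAt_of_tendsto pi_pos
    (fun v hv => hasDerivAt_im_primitive_contour hw hx hv)
    (intervalIntegrable_integrand (by rw [← hx]; positivity))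
    (tendsto_im_primitive_contour_zero hw hx) (tendsto_im_primitive_contour_pi hw hx), sub_zero]

end LambertWStieltjes

end

open LambertWStieltjes in
/-- Stieltjes integral representation of `1/(1 + W(x))` for the principal real branch
of Lambert W on `(0, ∞)`. -/
theorem one_div_one_add_lambertW (W : ℝ → ℝ)
    (hW : ∀ x > 0, W x * Real.exp (W x) = x) (hWpos : ∀ x > 0, W x > 0) :
    ∀ x > (0:ℝ),
      1 / (1 + W x) = (1 / π) * ∫ v in (0:ℝ)..π,
        1 / (1 + x * Real.exp (v * Real.cot v) * Real.sin v / v) := by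
  intro x hx
  change 1 / (1 + W x) = 1 / π * ∫ v in (0 : ℝ)..π, integrand x v
  rw [integral_integrand (hWpos x hx) (hW x hx)]
  field_simp
end

section
/- Let W : ℝ → ℝ satisfy W(x) * exp(W(x)) = x for all x ∈ (-1/e, e), with W real-valued there and W(x) > -1. Then for all x ∈ (-1/e, e), W(x) = (2/π) * ∫ from 0 to π of (cos(3θ/2) - x*exp(-cos θ)*cos(5θ/2 + sin θ)) / (1 - 2x*exp(-cos θ)*cos(θ + sin θ) + x^2*exp(-2cos θ)) * cos(θ/2) dθ. -/
/-!
For `x ∈ (-1/e, e)` the root `r = W x` lies in `(-1, 1)`, and it is the only zero of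
`g z - x`, `g z = z e^z`, in the closed unit disc: `Im (z e^z) = 0` forces `z` to be real
there (as `sin² t < t²` for `t ≠ 0`), and `t ↦ t e^t` is injective on `[-1, ∞)`.
Since this zero is simple, the argument principle gives
`∮_{|z|=1} z g'(z) / (g z - x) dz = 2πi r`.
On `z = e^{iθ}` the integrand has real coefficients, so the real part of the parametrised
integrand is symmetric under `θ ↦ 2π - θ`, and dividing numerator and denominator by `e^z`
turns it into twice Poisson's integrand.
-/

open Set Metric MeasureTheory
open scoped Real ComplexConjugate

theorem Real.strictMonoOn_mul_exp : StrictMonoOn (fun t : ℝ => t * Real.exp t) (Ici (-1)) := by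
  refine strictMonoOn_of_deriv_pos (convex_Ici _) (by fun_prop) fun t ht => ?_
  rw [interior_Ici, mem_Ioi] at ht
  have hd : HasDerivAt (fun t => t * Real.exp t) ((1 + t) * Real.exp t) t := by
    simpa [add_mul] using (hasDerivAt_id' t).fun_mul (Real.hasDerivAt_exp t)
  rw [hd.deriv]
  exact mul_pos (by linarith) (Real.exp_pos t)

theorem intervalIntegral.integral_zero_two_mul_eq_of_symm {E : Type*} [NormedAddCommGroup E]
    [NormedSpace ℝ E] {f : ℝ → E} {a : ℝ} (hf : IntervalIntegrable f volume 0 (2 * a))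
    (hsymm : ∀ θ, f (2 * a - θ) = f θ) :
    ∫ θ in 0..2 * a, f θ = (2 : ℝ) • ∫ θ in 0..a, f θ := by
  have ha : a ∈ uIcc 0 (2 * a) := by
    rcases le_total 0 a with h | h
    · exact mem_uIcc.2 (.inl ⟨h, by linarith⟩)
    · exact mem_uIcc.2 (.inr ⟨by linarith, h⟩)
  have hreflect : ∫ θ in a..2 * a, f θ = ∫ θ in 0..a, f θ :=
    calc ∫ θ in a..2 * a, f θ = ∫ θ in 0..a, f (2 * a - θ) := by
          rw [integral_comp_sub_left]; congr 1 <;> ring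
      _ = ∫ θ in 0..a, f θ := by simp_rw [hsymm]
  rw [← integral_add_adjacent_intervals (hf.mono_set (uIcc_subset_uIcc left_mem_uIcc ha))
      (hf.mono_set (uIcc_subset_uIcc ha right_mem_uIcc)), hreflect, two_smul]

namespace Complex

theorem im_eq_zero_of_im_mul_exp_eq_zero {w : ℂ} (hw : ‖w‖ ≤ 1) (h : (w * exp w).im = 0) :
    w.im = 0 := by
  by_contra hb
  have hnorm : w.re ^ 2 + w.im ^ 2 ≤ 1 := by nlinarith [sq_norm_sub_sq_re w, norm_nonneg w]
  have hlin : w.re * Real.sin w.im = -(w.im * Real.cos w.im) := by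
    simp only [mul_im, exp_re, exp_im] at h
    nlinarith [Real.exp_pos w.re]
  -- squaring `hlin` gives `(re² + im²) sin² im = im²`, impossible as `sin² t < t²` for `t ≠ 0`
  have hsq : (w.re ^ 2 + w.im ^ 2) * Real.sin w.im ^ 2 = w.im ^ 2 := by
    linear_combination (w.re * Real.sin w.im - w.im * Real.cos w.im) * hlin +
      w.im ^ 2 * Real.sin_sq_add_cos_sq w.im
  nlinarith [Real.sin_sq_lt_sq hb, sq_nonneg (Real.sin w.im)]

theorem eq_ofReal_of_mul_exp_eq {w : ℂ} {r : ℝ} (hw : ‖w‖ ≤ 1) (hr : -1 ≤ r)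
    (h : w * exp w = r * exp r) : w = r := by
  have him : w.im = 0 := im_eq_zero_of_im_mul_exp_eq_zero hw (by rw [h]; norm_cast)
  have hw' : w = (w.re : ℂ) := ext rfl (by simpa using him)
  rw [hw'] at h hw ⊢
  norm_cast at h
  have hre : -1 ≤ w.re := by rw [norm_real, Real.norm_eq_abs] at hw; linarith [neg_abs_le w.re]
  exact congrArg _ (Real.strictMonoOn_mul_exp.injOn hre hr h)

theorem circleIntegral_mul_deriv_div_eq_of_unique_zero {f h : ℂ → ℂ} {U : Set ℂ} {c a : ℂ}
    {R : ℝ} (hU : IsOpen U) (hRU : closedBall c R ⊆ U) (hf : DifferentiableOn ℂ f U)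
    (hh : DifferentiableOn ℂ h U) (ha : a ∈ ball c R) (hfa : f a = 0) (hf'a : deriv f a ≠ 0)
    (hf0 : ∀ z ∈ closedBall c R, f z = 0 → z = a) :
    (∮ z in C(c, R), h z * deriv f z / f z) = 2 * π * I * h a := by
  have hslope : ∀ z ∈ closedBall c R, dslope f a z ≠ 0 := by
    intro z hz
    rcases eq_or_ne z a with rfl | hza
    · rwa [dslope_same]
    · rw [dslope_of_ne _ hza, slope_def_field, hfa, sub_zero]
      exact div_ne_zero (mt (hf0 z hz) hza) (sub_ne_zero.2 hza)
  have hdslope : DifferentiableOn ℂ (dslope f a) U :=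
    (differentiableOn_dslope (hU.mem_nhds (hRU (ball_subset_closedBall ha)))).2 hf
  have hF : DifferentiableOn ℂ (fun z => h z * deriv f z / dslope f a z) (closedBall c R) :=
    ((hh.mul (hf.deriv hU)).mono hRU).div (hdslope.mono hRU) hslope
  have hcauchy := hF.circleIntegral_sub_inv_smul ha
  rw [dslope_same, mul_div_cancel_right₀ _ hf'a] at hcauchy
  refine (circleIntegral.integral_congr (dist_nonneg.trans ha.le) fun z hz => ?_).trans hcauchy
  have hza : z ≠ a := fun h => (mem_sphere.1 hz ▸ (mem_ball.1 (h ▸ ha))).false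
  have hfz : f z ≠ 0 := mt (hf0 z (sphere_subset_closedBall hz)) hza
  rw [dslope_of_ne _ hza, slope_def_field, hfa, sub_zero, smul_eq_mul]
  field_simp [sub_ne_zero.2 hza]

theorem im_circleIntegral {f : ℂ → ℂ} {c : ℂ} {R : ℝ} (hf : CircleIntegrable f c R) :
    (∮ z in C(c, R), f z).im = ∫ θ in 0..2 * π, (circleMap 0 R θ * f (circleMap c R θ)).re := by
  rw [circleIntegral, ← RCLike.im_to_complex, ← intervalIntegral.intervalIntegral_im hf.out]
  simp [deriv_circleMap, mul_right_comm _ I]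

theorem re_exp_mul_I_div_one_sub_mul_exp (α β q : ℝ) :
    (exp (α * I) / (1 - q * exp (-β * I))).re =
      (Real.cos α - q * Real.cos (α + β)) / (1 - 2 * q * Real.cos β + q ^ 2) := by
  have hre : (1 - q * exp (-β * I)).re = 1 - q * Real.cos β := by
    simp [← ofReal_neg, exp_ofReal_mul_I_re]
  have him : (1 - q * exp (-β * I)).im = q * Real.sin β := by
    simp [← ofReal_neg, exp_ofReal_mul_I_im]
  have hnormSq : normSq (1 - q * exp (-β * I)) = 1 - 2 * q * Real.cos β + q ^ 2 := by
    rw [normSq_apply, hre, him]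
    linear_combination q ^ 2 * Real.sin_sq_add_cos_sq β
  rw [div_re, hnormSq, ← add_div, hre, him, exp_ofReal_mul_I_re, exp_ofReal_mul_I_im,
    Real.cos_add]
  ring

noncomputable def lambertKernel (x : ℝ) (z : ℂ) : ℂ := z * ((1 + z) * exp z) / (z * exp z - x)

theorem lambertKernel_conj (x : ℝ) (z : ℂ) :
    lambertKernel x (conj z) = conj (lambertKernel x z) := by
  simp [lambertKernel, exp_conj]

theorem mul_lambertKernel_eq_of_eq_exp (x θ : ℝ) {z : ℂ} (hz : z = exp (θ * I)) :
    z * lambertKernel x z =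
      (2 * Real.cos (θ / 2) : ℝ) * (exp ((3 * θ / 2 : ℝ) * I) /
        (1 - (x * Real.exp (-Real.cos θ) : ℝ) * exp (-(θ + Real.sin θ : ℝ) * I))) := by
  have hz2 : z = exp ((θ / 2 : ℝ) * I) ^ 2 := by
    rw [hz, ← exp_nat_mul]; congr 1; push_cast; ring
  have hexpz : exp z = Real.exp (Real.cos θ) * exp (Real.sin θ * I) := by
    rw [hz, exp_mul_I, ← ofReal_cos, ← ofReal_sin, exp_add, ofReal_exp]
  have hcos : ((2 * Real.cos (θ / 2) : ℝ) : ℂ) =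
      exp ((θ / 2 : ℝ) * I) + (exp ((θ / 2 : ℝ) * I))⁻¹ := by
    rw [ofReal_mul, ofReal_cos, cos, ← exp_neg]; push_cast; ring_nf
  have h3 : exp ((3 * θ / 2 : ℝ) * I) = exp ((θ / 2 : ℝ) * I) ^ 3 := by
    rw [← exp_nat_mul]; congr 1; push_cast; ring
  have hq : exp (-(θ + Real.sin θ : ℝ) * I) =
      (exp ((θ / 2 : ℝ) * I) ^ 2 * exp (Real.sin θ * I))⁻¹ := by
    rw [← exp_nat_mul, ← exp_add, ← exp_neg]; congr 1; push_cast; ring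
  rw [lambertKernel, hcos, h3, hq, ofReal_mul, Real.exp_neg, ofReal_inv, hexpz, hz2]
  have hv : exp ((θ / 2 : ℝ) * I) ≠ 0 := exp_ne_zero _
  have hσ : exp (Real.sin θ * I) ≠ 0 := exp_ne_zero _
  have hE : ((Real.exp (Real.cos θ) : ℝ) : ℂ) ≠ 0 := ofReal_ne_zero.2 (Real.exp_ne_zero _)
  generalize exp ((θ / 2 : ℝ) * I) = v at hv ⊢
  generalize exp (Real.sin θ * I) = σ at hσ ⊢
  generalize ((Real.exp (Real.cos θ) : ℝ) : ℂ) = E at hE ⊢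
  field_simp
  ring

theorem re_circleMap_mul_lambertKernel (x θ : ℝ) :
    (circleMap 0 1 θ * lambertKernel x (circleMap 0 1 θ)).re =
      2 * ((Real.cos (3 * θ / 2) -
            x * Real.exp (-Real.cos θ) * Real.cos (5 * θ / 2 + Real.sin θ)) /
          (1 - 2 * x * Real.exp (-Real.cos θ) * Real.cos (θ + Real.sin θ) +
            x ^ 2 * Real.exp (-2 * Real.cos θ)) * Real.cos (θ / 2)) := by
  rw [mul_lambertKernel_eq_of_eq_exp x θ (by simp [circleMap_zero]), re_ofReal_mul,
    re_exp_mul_I_div_one_sub_mul_exp,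
    show 3 * θ / 2 + (θ + Real.sin θ) = 5 * θ / 2 + Real.sin θ by ring,
    mul_pow, ← Real.exp_nat_mul]
  push_cast
  ring_nf

section

variable {x r : ℝ} (hr : r ∈ Ioo (-1) 1) (hx : r * Real.exp r = x)
include hr hx

theorem eq_of_mem_closedBall_of_mul_exp_sub_eq_zero {z : ℂ} (hz : z ∈ closedBall 0 1)
    (h : z * exp z - x = 0) : z = r :=
  eq_ofReal_of_mul_exp_eq (mem_closedBall_zero_iff.1 hz) hr.1.le
    (by rw [sub_eq_zero.1 h, ← hx]; push_cast; rfl)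

theorem continuousOn_lambertKernel : ContinuousOn (lambertKernel x) (sphere 0 1) := by
  refine ContinuousOn.div (by fun_prop) (by fun_prop) fun z hz h => ?_
  have hzr := eq_of_mem_closedBall_of_mul_exp_sub_eq_zero hr hx (sphere_subset_closedBall hz) h
  rw [hzr, mem_sphere_zero_iff_norm, norm_real, Real.norm_eq_abs] at hz
  exact (abs_lt.2 hr).ne hz

theorem circleIntegral_lambertKernel : (∮ z in C(0, 1), lambertKernel x z) = 2 * π * I * r := by
  have hderiv : deriv (fun z => z * exp z - x) = fun z => (1 + z) * exp z := by
    ext z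
    exact ((((hasDerivAt_id z).mul (hasDerivAt_exp z)).sub_const (x : ℂ)).deriv).trans
      (by simp [add_mul])
  have := circleIntegral_mul_deriv_div_eq_of_unique_zero (f := fun z => z * exp z - x) (h := id)
    isOpen_univ (subset_univ _) (by fun_prop) differentiableOn_id (a := r) ?_ ?_ ?_
    (fun z hz => eq_of_mem_closedBall_of_mul_exp_sub_eq_zero hr hx hz)
  · simpa only [hderiv, id, lambertKernel] using this
  · simpa using abs_lt.2 hr
  · simp [← hx]
  · rw [hderiv]
    exact mul_ne_zero (by exact_mod_cast (show 1 + r ≠ 0 by linarith [hr.1])) (exp_ne_zero _)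

theorem integral_re_circleMap_mul_lambertKernel :
    ∫ θ in 0..π, (circleMap 0 1 θ * lambertKernel x (circleMap 0 1 θ)).re = π * r := by
  have hcont := continuousOn_lambertKernel hr hx
  have hφ : Continuous fun θ => (circleMap 0 1 θ * lambertKernel x (circleMap 0 1 θ)).re :=
    continuous_re.comp ((continuous_circleMap 0 1).mul
      (hcont.comp_continuous (continuous_circleMap 0 1) (circleMap_mem_sphere 0 zero_le_one)))
  have hsymm (θ : ℝ) : circleMap 0 1 (2 * π - θ) = conj (circleMap 0 1 θ) := by
    rw [sub_eq_neg_add, periodic_circleMap, conj_circleMap_zero]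
  have h2π := congrArg im (circleIntegral_lambertKernel hr hx)
  rw [im_circleIntegral (hcont.circleIntegrable zero_le_one),
    intervalIntegral.integral_zero_two_mul_eq_of_symm (hφ.intervalIntegrable _ _)
      fun θ => by simp only [hsymm, lambertKernel_conj, ← map_mul, conj_re],
    smul_eq_mul, show (2 * π * I * r : ℂ).im = 2 * π * r by simp] at h2π
  linarith

end

end Complex

open Real

/-- Poisson's integral representation of the principal branch of Lambert W on
`(-1/e, e)`. -/
theorem lambertW_poisson (W : ℝ → ℝ)
    (hW : ∀ x ∈ Set.Ioo (-1 / Real.exp 1) (Real.exp 1), W x * Real.exp (W x) = x)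
    (hWgt : ∀ x ∈ Set.Ioo (-1 / Real.exp 1) (Real.exp 1), W x > -1) :
    ∀ x ∈ Set.Ioo (-1 / Real.exp 1) (Real.exp 1),
      W x = (2 / π) * ∫ θ in (0:ℝ)..π,
        (Real.cos (3 * θ / 2) -
            x * Real.exp (-Real.cos θ) * Real.cos (5 * θ / 2 + Real.sin θ)) /
          (1 - 2 * x * Real.exp (-Real.cos θ) * Real.cos (θ + Real.sin θ) +
            x ^ 2 * Real.exp (-2 * Real.cos θ)) * Real.cos (θ / 2) := by
  intro x hx
  have hlt : W x < 1 := by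
    refine (strictMonoOn_mul_exp.lt_iff_lt (hWgt x hx).le (by norm_num)).1 ?_
    simpa [hW x hx] using hx.2
  have hint := Complex.integral_re_circleMap_mul_lambertKernel ⟨hWgt x hx, hlt⟩ (hW x hx)
  simp_rw [Complex.re_circleMap_mul_lambertKernel, intervalIntegral.integral_const_mul] at hint
  rw [div_mul_eq_mul_div, hint, mul_div_cancel_left₀ _ pi_ne_zero]
end

section
/- For all v ∈ (0, π/2), v^2 * sec(v)^2 * exp(-2*v*tan v) ≤ 1. -/
open Real

/-- The bound `v² sec²(v) e^{-2 v tan v} ≤ 1` for `v ∈ (0, π/2)`, used to verify that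
`W(z)/z` is a Stieltjes function via the Nevanlinna criterion. -/
theorem sq_sec_exp_bound (v : ℝ) (hv : v ∈ Set.Ioo 0 (π / 2)) :
    v ^ 2 * (1 / Real.cos v) ^ 2 * Real.exp (-2 * v * Real.tan v) ≤ 1 := by
  obtain ⟨hv0, hv2⟩ := hv
  have hc : 0 < Real.cos v := Real.cos_pos_of_mem_Ioo ⟨by linarith [Real.pi_pos], hv2⟩
  have hs : 0 < Real.sin v := Real.sin_pos_of_pos_of_lt_pi hv0 (by linarith [Real.pi_pos])
  have hs1 : Real.sin v ≤ 1 := Real.sin_le_one v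
  have htan : v ≤ Real.tan v := le_of_lt (Real.lt_tan hv0 hv2)
  have ht0 : 0 ≤ v * Real.tan v := mul_nonneg hv0.le (le_trans hv0.le htan)
  -- key: v ≤ cos v + v * sin v
  have hkey : v ≤ Real.cos v + v * Real.sin v := by
    have h1 : v * (1 - Real.sin v) ≤ Real.tan v * (1 - Real.sin v) :=
      mul_le_mul_of_nonneg_right htan (by linarith)
    have h2 : Real.tan v * (1 - Real.sin v) ≤ Real.cos v := by
      rw [Real.tan_eq_sin_div_cos, div_mul_eq_mul_div, div_le_iff₀ hc]
      have hpyth := Real.sin_sq_add_cos_sq v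
      nlinarith
    nlinarith
  -- so v ≤ cos v * exp (v * tan v)
  have hexp : 1 + v * Real.tan v ≤ Real.exp (v * Real.tan v) := by
    linarith [Real.add_one_le_exp (v * Real.tan v)]
  have hmain : v ≤ Real.cos v * Real.exp (v * Real.tan v) := by
    have : Real.cos v * (1 + v * Real.tan v) = Real.cos v + v * Real.sin v := by
      rw [Real.tan_eq_sin_div_cos]
      field_simp
    nlinarith [Real.exp_pos (v * Real.tan v)]
  -- now square
  have hE : Real.exp (-2 * v * Real.tan v) = (Real.exp (-(v * Real.tan v))) ^ 2 := by
    rw [← Real.exp_nat_mul]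
    ring_nf
  have hfac : v * (1 / Real.cos v) * Real.exp (-(v * Real.tan v)) ≤ 1 := by
    rw [Real.exp_neg, mul_comm v (1 / Real.cos v), mul_assoc, one_div,
      inv_mul_le_iff₀ hc, mul_one]
    rw [mul_comm, inv_mul_le_iff₀ (Real.exp_pos _), mul_comm]
    exact hmain
  have hnn : 0 ≤ v * (1 / Real.cos v) * Real.exp (-(v * Real.tan v)) := by positivity
  calc v ^ 2 * (1 / Real.cos v) ^ 2 * Real.exp (-2 * v * Real.tan v)
      = (v * (1 / Real.cos v) * Real.exp (-(v * Real.tan v))) ^ 2 := by rw [hE]; ring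
    _ ≤ 1 ^ 2 := by exact pow_le_pow_left₀ hnn hfac 2
    _ = 1 := one_pow 2
end

section
/- Let W be the principal branch of the Lambert W function, holomorphic on ℂ \ (-∞, -1/e] with W(z) e^{W(z)} = z. For real t < -1/e, writing W(t) = u + i v with v ∈ (0, π), the derivative of v with respect to t satisfies dv/dt = v / (t * (v^2 + (1 - v * cot v)^2)). -/
open Real

/-! Logarithmic differentiation of `t = (-v) · csc v · e^{-v cot v}`:
`t'/t = 1/v - cot v + (-v cot v)' = 1/v - 2 cot v + v (1 + cot² v) = (v² + (1 - v cot v)²) / v`. -/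

namespace Real

theorem hasDerivAt_cot {x : ℝ} (hx : sin x ≠ 0) : HasDerivAt cot (-(1 + cot x ^ 2)) x := by
  rw [show cot = fun y => cos y / sin y from funext cot_eq_cos_div_sin]
  refine ((hasDerivAt_cos x).div (hasDerivAt_sin x) hx).congr_deriv ?_
  field_simp
  ring

theorem hasDerivAt_one_div_sin {x : ℝ} (hx : sin x ≠ 0) :
    HasDerivAt (fun y => 1 / sin y) (-(cot x * (1 / sin x))) x := by
  simp only [one_div]
  refine ((hasDerivAt_sin x).inv hx).congr_deriv ?_
  rw [cot_eq_cos_div_sin]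
  field_simp

end Real

/-- Derivative of the branch-cut parametrization: for `t(v) = -v csc(v) e^{-v cot v}`
on `(0, π)`, one has `dt/dv = t(v) (v² + (1 - v cot v)²) / v`, equivalently
`dv/dt = v / (t (v² + (1 - v cot v)²))`. -/
theorem branch_cut_param_hasDerivAt (v : ℝ) (hv : v ∈ Set.Ioo 0 π) :
    HasDerivAt (fun w : ℝ => -w * (1 / Real.sin w) * Real.exp (-w * Real.cot w))
      ((-v * (1 / Real.sin v) * Real.exp (-v * Real.cot v)) *
        (v ^ 2 + (1 - v * Real.cot v) ^ 2) / v) v := by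
  have hsin : sin v ≠ 0 := (sin_pos_of_pos_of_lt_pi hv.1 hv.2).ne'
  have hcsc : HasDerivAt (fun w => -w * (1 / sin w))
      (-1 * (1 / sin v) + -v * -(cot v * (1 / sin v))) v :=
    (hasDerivAt_neg v).mul (hasDerivAt_one_div_sin hsin)
  have hexp : HasDerivAt (fun w => exp (-w * cot w))
      (exp (-v * cot v) * (-1 * cot v + -v * -(1 + cot v ^ 2))) v :=
    ((hasDerivAt_neg v).mul (hasDerivAt_cot hsin)).exp
  refine (hcsc.mul hexp).congr_deriv ?_
  field_simp [hv.1.ne']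
  ring
end
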